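/- Let F be a plane in ℝ³ with fixed point x_F and ℓ ≥ 0 an integer. Then the space of two-dimensional vector-valued polynomials of total degree ≤ ℓ on F decomposes as a direct sum P^ℓ(F)² = R^ℓ(F) ⊕ R^{c,ℓ}(F), where R^ℓ(F) = rot_F P^{ℓ+1}(F) and R^{c,ℓ}(F) = (x - x_F) P^{ℓ-1}(F). -/

import Mathlib

open MvPolynomial

/-- Vector-valued polynomials of total degree ≤ ℓ on a face (identified with ℝ²). -/
def PvecF (ℓ : ℕ) : Set ((Fin 2 → ℝ) → (Fin 2 → ℝ)) :=
  {v | ∃ p : Fin 2 → MvPolynomial (Fin 2) ℝ,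
    (∀ i, (p i).totalDegree ≤ ℓ) ∧ ∀ x i, v x i = eval x (p i)}

/-- `R^ℓ(F) = rot_F P^{ℓ+1}(F)`, with `rot_F f = (∂₂ f, -∂₁ f)`. -/
def RolyF (ℓ : ℕ) : Set ((Fin 2 → ℝ) → (Fin 2 → ℝ)) :=
  {v | ∃ p : MvPolynomial (Fin 2) ℝ, p.totalDegree ≤ ℓ + 1 ∧
    ∀ x, v x 0 = eval x (pderiv 1 p) ∧ v x 1 = -eval x (pderiv 0 p)}

/-- `R^{c,ℓ}(F) = (x - x_F) P^{ℓ-1}(F)`, with the convention `P^{-1} = {0}`. -/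
def RolyCF (ℓ : ℕ) (xF : Fin 2 → ℝ) : Set ((Fin 2 → ℝ) → (Fin 2 → ℝ)) :=
  {v | ∃ q : MvPolynomial (Fin 2) ℝ, (q.totalDegree + 1 ≤ ℓ ∨ q = 0) ∧
    ∀ x i, v x i = (x i - xF i) * eval x q}

/-!
With `E = x·∇` the Euler operator, every vector field `u` satisfies
`rot (x₁ u₀ - x₀ u₁) + x (∂₀u₀ + ∂₁u₁) = (1 + E) u`, and `1 + E` is invertible on `P^ℓ` because it
multiplies each monomial of degree `k` by `k + 1`: this gives the decomposition. Conversely, if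
`rot p + x q = 0` then `E p = x₀ x₁ q - x₁ x₀ q = 0`, so `p` is constant and `x q = 0`,
i.e. `q = 0`.
Both arguments are made at `x_F = 0` and transported by the translation `x ↦ x - x_F`.
-/

namespace MvPolynomial

section Translate

variable {σ R : Type*} [CommRing R]

noncomputable def translate (c : σ → R) : MvPolynomial σ R →ₐ[R] MvPolynomial σ R :=
  aeval fun i => X i + C (c i)

@[simp]
lemma translate_X (c : σ → R) (i : σ) : translate c (X i) = X i + C (c i) := aeval_X _ _

@[simp]
lemma translate_C (c : σ → R) (a : R) : translate c (C a) = C a := aeval_C _ _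

lemma translate_neg_X (c : σ → R) (i : σ) : translate (-c) (X i) = X i - C (c i) := by
  rw [translate_X, Pi.neg_apply, C_neg, sub_eq_add_neg]

lemma translate_translate (c d : σ → R) (f : MvPolynomial σ R) :
    translate c (translate d f) = translate (c + d) f := by
  rw [← AlgHom.comp_apply]
  congr 1
  refine algHom_ext fun i => ?_
  simp only [AlgHom.comp_apply, translate_X, map_add, translate_C, Pi.add_apply]
  ring

@[simp]
lemma translate_zero (f : MvPolynomial σ R) : translate 0 f = f := by
  rw [← AlgHom.id_apply (R := R) f, ← AlgHom.comp_apply]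
  congr 1
  refine algHom_ext fun i => ?_
  simp

lemma translate_neg_translate (c : σ → R) (f : MvPolynomial σ R) :
    translate (-c) (translate c f) = f := by
  rw [translate_translate, neg_add_cancel, translate_zero]

lemma translate_injective (c : σ → R) : Function.Injective (translate c) :=
  Function.LeftInverse.injective (translate_neg_translate c)

lemma pderiv_translate (c : σ → R) (i : σ) (f : MvPolynomial σ R) :
    pderiv i (translate c f) = translate c (pderiv i f) := by
  induction f using MvPolynomial.induction_on with
  | C a => simp [translate]
  | add p q hp hq => simp only [map_add, hp, hq]
  | mul_X p j h =>
    by_cases hij : j = i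
    · subst hij
      simp [h]
    · simp [h, pderiv_X_of_ne hij]

lemma totalDegree_aeval_le {τ : Type*} {g : σ → MvPolynomial τ R}
    (hg : ∀ i, (g i).totalDegree ≤ 1) (f : MvPolynomial σ R) :
    (aeval g f).totalDegree ≤ f.totalDegree := by
  conv_lhs => rw [f.as_sum, map_sum]
  refine totalDegree_finsetSum_le fun m hm => ?_
  rw [aeval_monomial, algebraMap_eq]
  refine (totalDegree_mul _ _).trans ?_
  rw [totalDegree_C, zero_add]
  refine (totalDegree_finsetProd _ _).trans (le_trans ?_ (le_totalDegree hm))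
  refine Finset.sum_le_sum fun i _ => (totalDegree_pow _ _).trans ?_
  simpa using Nat.mul_le_mul_left (m i) (hg i)

lemma totalDegree_translate (c : σ → R) (f : MvPolynomial σ R) :
    (translate c f).totalDegree = f.totalDegree := by
  have key : ∀ (d : σ → R) (g : MvPolynomial σ R), (translate d g).totalDegree ≤ g.totalDegree :=
    fun d g => totalDegree_aeval_le (fun i => (totalDegree_add _ _).trans <|
      max_le ((totalDegree_monomial_le _ _).trans_eq (by simp)) (by simp)) g
  refine (key c f).antisymm ?_
  simpa [translate_neg_translate] using key (-c) (translate c f)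

end Translate

section Euler

variable {σ : Type*} [Fintype σ]

lemma coeff_sum_X_mul_pderiv {R : Type*} [CommSemiring R] (f : MvPolynomial σ R)
    (m : σ →₀ ℕ) : coeff m (∑ i, X i * pderiv i f) = m.degree • coeff m f := by
  induction f using MvPolynomial.induction_on' with
  | monomial n a =>
    classical
    simp only [X_mul_pderiv_monomial, coeff_sum, coeff_smul]
    rw [← Finset.sum_smul, ← Finsupp.degree_eq_sum, coeff_monomial]
    split_ifs with h
    · rw [h]
    · simp
  | add p q hp hq =>
    simp only [map_add, mul_add, Finset.sum_add_distrib, coeff_add, hp, hq, smul_add]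

variable {K : Type*} [Field K] [CharZero K]

lemma eq_C_of_sum_X_mul_pderiv_eq_zero {f : MvPolynomial σ K}
    (h : ∑ i, X i * pderiv i f = 0) : f = C (coeff 0 f) := by
  classical
  ext m
  rcases eq_or_ne m 0 with rfl | hm
  · simp
  · have hcoeff := congrArg (coeff m) h
    rw [coeff_sum_X_mul_pderiv, coeff_zero, smul_eq_zero] at hcoeff
    rw [coeff_C, if_neg (Ne.symm hm)]
    exact hcoeff.resolve_left (by simpa [Finsupp.degree_eq_zero_iff] using hm)

lemma exists_add_sum_X_mul_pderiv_eq (w : MvPolynomial σ K) :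
    ∃ v : MvPolynomial σ K, v.totalDegree ≤ w.totalDegree ∧ v + ∑ i, X i * pderiv i v = w := by
  classical
  set v : MvPolynomial σ K := ∑ m ∈ w.support, monomial m (coeff m w / (m.degree + 1))
  have hcoeff : ∀ m, coeff m v = coeff m w / (m.degree + 1) := by
    intro m
    simp only [v, coeff_sum, coeff_monomial, Finset.sum_ite_eq', mem_support_iff]
    split_ifs with h
    · rfl
    · simp [not_not.mp h]
  refine ⟨v, totalDegree_le_of_support_subset fun m hm => ?_, ?_⟩
  · rw [mem_support_iff, hcoeff] at hm
    exact mem_support_iff.mpr (div_ne_zero_iff.mp hm).1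
  · ext m
    rw [coeff_add, coeff_sum_X_mul_pderiv, hcoeff, nsmul_eq_mul]
    field_simp
    ring

end Euler

section Degree

variable {σ R : Type*}

lemma degree_add_one_le_totalDegree_of_mem_support_pderiv [CommSemiring R]
    {f : MvPolynomial σ R} {i : σ} {m : σ →₀ ℕ} (hm : m ∈ (pderiv i f).support) :
    m.degree + 1 ≤ f.totalDegree := by
  rw [mem_support_iff, coeff_pderiv] at hm
  have : (m + Finsupp.single i 1).degree ≤ f.totalDegree :=
    le_totalDegree (mem_support_iff.mpr (left_ne_zero_of_mul hm))
  rwa [map_add, Finsupp.degree_single] at this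

lemma totalDegree_pderiv_le [CommSemiring R] (f : MvPolynomial σ R) (i : σ) :
    (pderiv i f).totalDegree ≤ f.totalDegree - 1 :=
  Finset.sup_le fun _ hm =>
    Nat.le_sub_one_of_lt (degree_add_one_le_totalDegree_of_mem_support_pderiv hm)

lemma totalDegree_X_sub_C_mul_le [CommRing R] [Nontrivial R] {ℓ : ℕ} {q : MvPolynomial σ R}
    (hq : q.totalDegree + 1 ≤ ℓ ∨ q = 0) (i : σ) (a : R) :
    ((X i - C a) * q).totalDegree ≤ ℓ := by
  rcases hq with hq | rfl
  · refine (totalDegree_mul _ _).trans ?_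
    have := (totalDegree_sub_C_le (X i : MvPolynomial σ R) a).trans_eq (totalDegree_X i)
    omega
  · simp

end Degree

section Plane

lemma pderiv_add_X_mul_div_eq {R : Type*} [CommRing R] (u : Fin 2 → MvPolynomial (Fin 2) R) :
    pderiv 1 (X 1 * u 0 - X 0 * u 1) + X 0 * (pderiv 0 (u 0) + pderiv 1 (u 1))
        = u 0 + ∑ i, X i * pderiv i (u 0) ∧
      -pderiv 0 (X 1 * u 0 - X 0 * u 1) + X 1 * (pderiv 0 (u 0) + pderiv 1 (u 1))
        = u 1 + ∑ i, X i * pderiv i (u 1) := by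
  simp only [map_sub, pderiv_mul, pderiv_X_self, pderiv_X_of_ne (by decide : (0 : Fin 2) ≠ 1),
    pderiv_X_of_ne (by decide : (1 : Fin 2) ≠ 0), Fin.sum_univ_two]
  constructor <;> ring

variable {K : Type*} [Field K] [CharZero K]

lemma exists_pderiv_add_X_mul_eq {ℓ : ℕ} {v : Fin 2 → MvPolynomial (Fin 2) K}
    (hv : ∀ i, (v i).totalDegree ≤ ℓ) :
    ∃ p q : MvPolynomial (Fin 2) K, p.totalDegree ≤ ℓ + 1 ∧ (q.totalDegree + 1 ≤ ℓ ∨ q = 0) ∧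
      pderiv 1 p + X 0 * q = v 0 ∧ -pderiv 0 p + X 1 * q = v 1 := by
  choose u hu_deg hu using fun i => exists_add_sum_X_mul_pderiv_eq (v i)
  have hu_deg i : (u i).totalDegree ≤ ℓ := (hu_deg i).trans (hv i)
  obtain ⟨e0, e1⟩ := pderiv_add_X_mul_div_eq u
  refine ⟨X 1 * u 0 - X 0 * u 1, pderiv 0 (u 0) + pderiv 1 (u 1), ?_, ?_, e0.trans (hu 0),
    e1.trans (hu 1)⟩
  · have hX_mul i j : (X i * u j).totalDegree ≤ ℓ + 1 :=
      (totalDegree_mul _ _).trans (by rw [totalDegree_X]; linarith [hu_deg j])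
    exact (totalDegree_sub _ _).trans (max_le (hX_mul 1 0) (hX_mul 0 1))
  · set q := pderiv 0 (u 0) + pderiv 1 (u 1)
    rcases eq_or_ne q 0 with hq | hq
    · exact Or.inr hq
    obtain ⟨m, hm, hm_deg⟩ := Finset.exists_mem_eq_sup q.support (support_nonempty.mpr hq)
      fun m => m.sum fun _ e => e
    refine Or.inl ?_
    rw [totalDegree, hm_deg]
    rcases Finset.mem_union.mp (support_add hm) with hm | hm
    · exact (degree_add_one_le_totalDegree_of_mem_support_pderiv hm).trans (hu_deg 0)
    · exact (degree_add_one_le_totalDegree_of_mem_support_pderiv hm).trans (hu_deg 1)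

lemma eq_zero_of_pderiv_add_X_mul_eq_zero {p q : MvPolynomial (Fin 2) K}
    (h0 : pderiv 1 p + X 0 * q = 0) (h1 : -pderiv 0 p + X 1 * q = 0) : q = 0 := by
  have hEuler : ∑ i, X i * pderiv i p = 0 := by
    rw [Fin.sum_univ_two]
    linear_combination X 1 * h0 - X 0 * h1
  rw [eq_C_of_sum_X_mul_pderiv_eq_zero hEuler, pderiv_C, zero_add] at h0
  exact (mul_eq_zero.mp h0).resolve_left (X_ne_zero 0)

lemma exists_pderiv_add_X_sub_C_mul_eq (c : Fin 2 → K) {ℓ : ℕ}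
    {v : Fin 2 → MvPolynomial (Fin 2) K} (hv : ∀ i, (v i).totalDegree ≤ ℓ) :
    ∃ p q : MvPolynomial (Fin 2) K, p.totalDegree ≤ ℓ + 1 ∧ (q.totalDegree + 1 ≤ ℓ ∨ q = 0) ∧
      pderiv 1 p + (X 0 - C (c 0)) * q = v 0 ∧ -pderiv 0 p + (X 1 - C (c 1)) * q = v 1 := by
  obtain ⟨p, q, hp, hq, e0, e1⟩ :=
    exists_pderiv_add_X_mul_eq (ℓ := ℓ) (v := fun i => translate c (v i)) fun i => by
      rw [totalDegree_translate]; exact hv i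
  refine ⟨translate (-c) p, translate (-c) q, by rwa [totalDegree_translate], ?_, ?_, ?_⟩
  · simpa [totalDegree_translate, map_eq_zero_iff _ (translate_injective (-c))] using hq
  · rw [← translate_neg_translate c (v 0), ← e0]
    simp only [map_add, map_mul, pderiv_translate, translate_neg_X]
  · rw [← translate_neg_translate c (v 1), ← e1]
    simp only [map_add, map_neg, map_mul, pderiv_translate, translate_neg_X]

lemma eq_zero_of_pderiv_add_X_sub_C_mul_eq_zero (c : Fin 2 → K) {p q : MvPolynomial (Fin 2) K}
    (h0 : pderiv 1 p + (X 0 - C (c 0)) * q = 0) (h1 : -pderiv 0 p + (X 1 - C (c 1)) * q = 0) :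
    q = 0 := by
  have hX i : translate c (X i - C (c i)) = X i := by simp
  refine (map_eq_zero_iff _ (translate_injective c)).mp
    (eq_zero_of_pderiv_add_X_mul_eq_zero (p := translate c p) ?_ ?_)
  · simpa only [map_add, map_mul, map_zero, pderiv_translate, hX] using congrArg (translate c) h0
  · simpa only [map_add, map_neg, map_mul, map_zero, pderiv_translate, hX]
      using congrArg (translate c) h1

end Plane

end MvPolynomial

section Face

variable {ℓ : ℕ} {xF : Fin 2 → ℝ}

lemma add_mem_PvecF {r c : (Fin 2 → ℝ) → (Fin 2 → ℝ)} (hr : r ∈ RolyF ℓ)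
    (hc : c ∈ RolyCF ℓ xF) : r + c ∈ PvecF ℓ := by
  obtain ⟨p, hp, hr⟩ := hr
  obtain ⟨q, hq, hc⟩ := hc
  have hpderiv i : (pderiv i p).totalDegree ≤ ℓ := (totalDegree_pderiv_le p i).trans (by omega)
  refine ⟨![pderiv 1 p + (X 0 - C (xF 0)) * q, -pderiv 0 p + (X 1 - C (xF 1)) * q], ?_, ?_⟩
  · intro i
    fin_cases i
    · exact (totalDegree_add _ _).trans (max_le (hpderiv 1) (totalDegree_X_sub_C_mul_le hq 0 _))
    · refine (totalDegree_add _ _).trans (max_le ?_ (totalDegree_X_sub_C_mul_le hq 1 _))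
      exact (totalDegree_neg _).trans_le (hpderiv 0)
  · intro x i
    fin_cases i <;> simp [(hr x).1, (hr x).2, hc]

lemma exists_mem_RolyF_mem_RolyCF_eq_add {v : (Fin 2 → ℝ) → (Fin 2 → ℝ)} (hv : v ∈ PvecF ℓ) :
    ∃ r ∈ RolyF ℓ, ∃ c ∈ RolyCF ℓ xF, v = r + c := by
  obtain ⟨g, hg, hv⟩ := hv
  obtain ⟨p, q, hp, hq, e0, e1⟩ := exists_pderiv_add_X_sub_C_mul_eq xF hg
  refine ⟨fun x => ![eval x (pderiv 1 p), -eval x (pderiv 0 p)], ⟨p, hp, fun x => ⟨rfl, rfl⟩⟩,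
    fun x i => (x i - xF i) * eval x q, ⟨q, hq, fun _ _ => rfl⟩, ?_⟩
  funext x i
  fin_cases i <;> simp [hv, ← e0, ← e1]

lemma eq_and_eq_of_RolyF_add_RolyCF_eq {r r' c c' : (Fin 2 → ℝ) → (Fin 2 → ℝ)} (hr : r ∈ RolyF ℓ)
    (hr' : r' ∈ RolyF ℓ) (hc : c ∈ RolyCF ℓ xF) (hc' : c' ∈ RolyCF ℓ xF) (h : r + c = r' + c') :
    r = r' ∧ c = c' := by
  obtain ⟨p, -, hr⟩ := hr
  obtain ⟨p', -, hr'⟩ := hr'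
  obtain ⟨q, -, hc⟩ := hc
  obtain ⟨q', -, hc'⟩ := hc'
  have hq : q - q' = 0 := by
    refine eq_zero_of_pderiv_add_X_sub_C_mul_eq_zero xF (p := p - p') ?_ ?_ <;>
      refine MvPolynomial.funext fun x => ?_
    · have := congrFun (congrFun h x) 0
      simp only [Pi.add_apply, (hr x).1, (hr' x).1, hc, hc'] at this
      simp only [map_sub, eval_add, eval_mul, eval_X, eval_C, map_zero]
      linear_combination this
    · have := congrFun (congrFun h x) 1
      simp only [Pi.add_apply, (hr x).2, (hr' x).2, hc, hc'] at this
      simp only [map_sub, map_neg, eval_add, eval_mul, eval_X, eval_C, map_zero]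
      linear_combination this
  have hcc : c = c' := by
    funext x i
    rw [hc, hc', sub_eq_zero.mp hq]
  exact ⟨add_right_cancel (h.trans (congrArg (r' + ·) hcc.symm)), hcc⟩

end Face

/-- Direct decomposition `P^ℓ(F)² = R^ℓ(F) ⊕ R^{c,ℓ}(F)`. -/
theorem Pvec_direct_sum_Roly_RolyC (ℓ : ℕ) (xF : Fin 2 → ℝ) :
    (∀ v, v ∈ PvecF ℓ ↔ ∃ r ∈ RolyF ℓ, ∃ c ∈ RolyCF ℓ xF, v = r + c) ∧
    (∀ r r' c c', r ∈ RolyF ℓ → r' ∈ RolyF ℓ → c ∈ RolyCF ℓ xF → c' ∈ RolyCF ℓ xF →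
      r + c = r' + c' → r = r' ∧ c = c') :=
  ⟨fun _ => ⟨exists_mem_RolyF_mem_RolyCF_eq_add,
      fun ⟨_, hr, _, hc, hv⟩ => hv ▸ add_mem_PvecF hr hc⟩,
    fun _ _ _ _ => eq_and_eq_of_RolyF_add_RolyCF_eq⟩
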